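/- For all n, C_n² = L_{2n+1} - 2, where C_0 = 2, C_1 = 14, C_n = 6C_{n-1} - C_{n-2} and L_0 = 2, L_1 = 6, L_n = 6L_{n-1} - L_{n-2}. -/
import Mathlib


def C : ℕ → ℤ
  | 0 => 2
  | 1 => 14
  | (n+2) => 6 * C (n+1) - C n

def L : ℕ → ℤ
  | 0 => 2
  | 1 => 6
  | (n+2) => 6 * L (n+1) - L n

lemma C_rec (n : ℕ) : C (n+2) = 6 * C (n+1) - C n := rfl
lemma L_rec (n : ℕ) : L (n+2) = 6 * L (n+1) - L n := rfl

lemma C_inv : ∀ n, (C (n+1))^2 - 6 * C n * C (n+1) + (C n)^2 = 32 := by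
  intro n
  induction n with
  | zero => norm_num [C]
  | succ n ih =>
    rw [C_rec]
    linear_combination ih

lemma key : ∀ n, (C n)^2 = L (2*n+1) - 2 ∧ C n * C (n+1) = L (2*n+2) - 6 := by
  intro n
  induction n with
  | zero => constructor <;> norm_num [C, L]
  | succ n ih =>
    obtain ⟨h1, h2⟩ := ih
    have e3 : 2*(n+1)+1 = (2*n+1)+2 := by ring
    have e4 : 2*(n+1)+2 = (2*n+2)+2 := by ring
    have hL3 := L_rec (2*n+1)
    have hL4 := L_rec (2*n+2)
    have hinv := C_inv n
    have p1 : (C (n+1))^2 = L (2*(n+1)+1) - 2 := by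
      rw [e3, hL3]
      have h2' : C n * C (n+1) = L ((2*n+1)+1) - 6 := h2
      linear_combination hinv + 6 * h2' - h1
    refine ⟨p1, ?_⟩
    rw [e4, hL4, C_rec]
    have e3' : (2*n+2)+1 = 2*(n+1)+1 := by ring
    rw [e3']
    linear_combination 6 * p1 - h2

theorem stmt8 (n : ℕ) : (C n)^2 = L (2*n+1) - 2 := by
  exact (key n).1
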